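/- Let q be a prime power and let GLS(n,q) denote the multiplicative semigroup of all n×n matrices over the finite field with q elements. Then liminf_{n→∞} l(GLS(n,q)) / q^{n^2 − n} ≥ (1 − c(q)) · (1 − 1/q)^2, where c(q) = ∏_{k=1}^∞ (1 − q^{−k}). -/

import Mathlib

/-!
Fix `e₀ = Pi.single 0 1` in `F^n` with `n = m + 2`, let `I` be the ideal of matrices of rank
`≤ m` and `T` the set of rank-`(m + 1)` matrices `A` with `A e₀ = 0` and `e₀ ∈ range A`. If
`A, B ∈ T` and `B w = e₀`, then `AB` kills the independent vectors `e₀` and `w`, so `AB ∈ I`.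
Hence `I` with any subset of `T` adjoined is a subsemigroup, and adjoining the elements of `T`
one at a time gives a chain of length `|T|`.

`T` contains the matrices with zero first column whose other columns form an independent tuple
spanning `e₀`. There are `P - Q` of these, `P` counting the independent `(m + 1)`-tuples and `Q`
those that stay independent after `e₀` is prepended. With `t = 1/q` and `φ = ∏ (1 - t^k)`,
`(P - Q) / q^(n² - n) → φ / (1 - t) - φ`, and `φ ≥ 1 - t - t²` suffices to bound this limit
below by `(1 - φ) (1 - t)²`.
-/

open Filter

/-- The length of a semigroup `M` (stated for any multiplicative structure): the largest
number of non-empty subsemigroups of `M` in a chain, minus 1; equivalently the largest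
`k` for which there is a strictly increasing chain of `k + 1` non-empty subsemigroups. -/
noncomputable def semigroupLength (M : Type*) [Mul M] : ℕ :=
  sSup {k : ℕ | ∃ c : Fin (k + 1) → Subsemigroup M,
    StrictMono c ∧ ∀ i, ((c i : Set M)).Nonempty}

open Finset Module Submodule Topology
open scoped Matrix

section SemigroupLength

variable {M : Type*} [Mul M] [Finite M]

theorem le_semigroupLength {k : ℕ} (c : Fin (k + 1) → Subsemigroup M) (hc : StrictMono c)
    (hne : ∀ i, (c i : Set M).Nonempty) : k ≤ semigroupLength M := by
  have : Finite (Subsemigroup M) := Finite.of_injective _ SetLike.coe_injective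
  refine le_csSup ⟨Nat.card (Subsemigroup M), ?_⟩ ⟨c, hc, hne⟩
  rintro j ⟨c', hc', -⟩
  have := Nat.card_le_card_of_injective c' hc'.injective
  rw [Nat.card_fin] at this
  omega

theorem natCard_le_semigroupLength (I : Subsemigroup M) (hI : (I : Set M).Nonempty)
    (T : Set M) (hTI : Disjoint T I)
    (hmul : ∀ a ∈ (I : Set M) ∪ T, ∀ b ∈ (I : Set M) ∪ T, a * b ∈ I) :
    Nat.card T ≤ semigroupLength M := by
  let e : Fin (Nat.card T) → M := (↑) ∘ (Finite.equivFin T).symm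
  have he : Function.Injective e :=
    Subtype.val_injective.comp (Finite.equivFin T).symm.injective
  have heT : Set.range e ⊆ T := by
    rintro _ ⟨i, rfl⟩
    exact ((Finite.equivFin T).symm i).2
  let c (j : Fin (Nat.card T + 1)) : Subsemigroup M :=
    { carrier := I ∪ e '' {i | (i : ℕ) < j}
      mul_mem' := by
        have hsub := Set.union_subset_union_right (I : Set M)
          ((Set.image_subset_range e {i | (i : ℕ) < j}).trans heT)
        exact fun {a b} ha hb => Or.inl (hmul _ (hsub ha) _ (hsub hb)) }
  refine le_semigroupLength c (fun j j' hjj' => ?_) fun j => hI.mono Set.subset_union_left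
  replace hjj' : (j : ℕ) < j' := hjj'
  have hj : (j : ℕ) < Nat.card T := hjj'.trans_le (Nat.lt_succ_iff.mp j'.2)
  refine SetLike.lt_iff_le_and_exists.mpr ⟨Set.union_subset_union_right _
    (Set.image_mono fun i hi => lt_trans hi hjj'), e ⟨j, hj⟩, Or.inr ⟨_, hjj', rfl⟩, ?_⟩
  rintro (hI' | ⟨i, hi, hij⟩)
  · exact hTI.ne_of_mem (heT ⟨_, rfl⟩) hI' rfl
  · exact hi.ne (congrArg Fin.val (he hij))

end SemigroupLength

section LinearIndependent

variable {K V : Type*} [DivisionRing K] [AddCommGroup V] [Module K V]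

theorem linearIndependent_finCons_iff_init {v : V} {k : ℕ} {s : Fin (k + 1) → V} :
    LinearIndependent K (Fin.cons v s : Fin (k + 2) → V) ↔
      LinearIndependent K (Fin.cons v (Fin.init s) : Fin (k + 1) → V) ∧
        s (Fin.last k) ∉ span K (Set.range (Fin.cons v (Fin.init s) : Fin (k + 1) → V)) := by
  conv_lhs => rw [← Fin.snoc_init_self s, Fin.cons_snoc_eq_snoc_cons]
  exact linearIndependent_finSnoc

def finConsLinearIndependentEquiv (v : V) (k : ℕ) :
    { s : Fin (k + 1) → V // LinearIndependent K (Fin.cons v s) } ≃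
      Σ s : { s : Fin k → V // LinearIndependent K (Fin.cons v s) },
        ((span K (Set.range (Fin.cons v (s : Fin k → V) : Fin (k + 1) → V)))ᶜ : Set V) where
  toFun s := ⟨⟨Fin.init s.1, (linearIndependent_finCons_iff_init.mp s.2).1⟩,
    ⟨s.1 (Fin.last k), (linearIndependent_finCons_iff_init.mp s.2).2⟩⟩
  invFun s := ⟨Fin.snoc s.1.1 s.2.1, linearIndependent_finCons_iff_init.mpr <| by
    rw [Fin.init_snoc, Fin.snoc_last]
    exact ⟨s.1.2, s.2.2⟩⟩
  left_inv s := by simp [Fin.snoc_init_self]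
  right_inv s := Sigma.subtype_ext (Subtype.ext (by simp)) (by simp)

attribute [local instance] Fintype.ofFinite in
theorem card_linearIndependent_finCons [Fintype K] [Finite V] {v : V} (hv : v ≠ 0) {k : ℕ}
    (hk : k + 1 ≤ finrank K V) :
    Nat.card { s : Fin k → V // LinearIndependent K (Fin.cons v s) } =
      ∏ i : Fin k, (Fintype.card K ^ finrank K V - Fintype.card K ^ (i.val + 1)) := by
  rw [Nat.card_eq_fintype_card]
  induction k with
  | zero =>
    have : Unique { s : Fin 0 → V // LinearIndependent K (Fin.cons v s) } :=
      { default := ⟨Fin.elim0, linearIndependent_finCons.mpr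
          ⟨linearIndependent_empty_type, by simpa using hv⟩⟩
        uniq := fun _ => Subsingleton.elim _ _ }
    rw [Fintype.card_unique, univ_eq_empty, prod_empty]
  | succ k ih =>
    have hfib (s : { s : Fin k → V // LinearIndependent K (Fin.cons v s) }) :
        Fintype.card
            ((span K (Set.range (Fin.cons v (s : Fin k → V) : Fin (k + 1) → V)))ᶜ : Set V) =
          Fintype.card K ^ finrank K V - Fintype.card K ^ (k + 1) := by
      rw [Fintype.card_compl_set, Module.card_eq_pow_finrank (K := K) (V := V),
        Module.card_eq_pow_finrank (K := K)
          (V := (span K (Set.range (Fin.cons v (s : Fin k → V) : Fin (k + 1) → V)) : Set V))]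
      simp only [SetLike.coe_sort_coe, finrank_span_eq_card s.2, Fintype.card_fin]
    rw [Fintype.card_congr (finConsLinearIndependentEquiv v k), Fintype.card_sigma,
      sum_congr rfl fun s _ => hfib s, sum_const, card_univ, smul_eq_mul,
      ih (by omega), Fin.prod_univ_castSucc]
    simp

theorem natCard_linearIndependent_mem_span_add [Finite V] (v : V) (k : ℕ) :
    Nat.card { s : Fin k → V // LinearIndependent K s ∧ v ∈ span K (Set.range s) } +
        Nat.card { s : Fin k → V // LinearIndependent K (Fin.cons v s) } =
      Nat.card { s : Fin k → V // LinearIndependent K s } := by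
  classical
  rw [Nat.card_congr (Equiv.subtypeEquivRight fun _ => linearIndependent_finCons),
    ← Nat.card_congr (Equiv.subtypeSubtypeEquivSubtypeInter _ _),
    ← Nat.card_congr (Equiv.subtypeSubtypeEquivSubtypeInter _ _), ← Nat.card_sum,
    Nat.card_congr (Equiv.sumCompl _)]

theorem LinearMap.finrank_range_comp_add_two_le [FiniteDimensional K V] {f g : V →ₗ[K] V}
    {v : V} (hv : v ≠ 0) (hfv : f v = 0) (hgv : g v = 0) (hvg : v ∈ LinearMap.range g) :
    finrank K (LinearMap.range (f ∘ₗ g)) + 2 ≤ finrank K V := by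
  obtain ⟨w, rfl⟩ := hvg
  have hlt : span K {g w} < LinearMap.ker (f ∘ₗ g) := by
    refine SetLike.lt_iff_le_and_exists.mpr ⟨?_, w, hfv, fun hw => hv ?_⟩
    · rw [span_singleton_le_iff_mem, LinearMap.mem_ker, LinearMap.comp_apply, hgv, map_zero]
    · obtain ⟨a, ha⟩ := mem_span_singleton.mp hw
      rw [← ha, map_smul, hgv, smul_zero]
  have hker := finrank_lt_finrank_of_lt hlt
  rw [finrank_span_singleton hv] at hker
  have := LinearMap.finrank_range_add_finrank_ker (f ∘ₗ g)
  omega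

end LinearIndependent

namespace Matrix

theorem rank_mul_add_two_le {F n : Type*} [Field F] [Fintype n] [DecidableEq n] {A B : Matrix n n F}
    {v : n → F} (hv : v ≠ 0) (hAv : A *ᵥ v = 0) (hBv : B *ᵥ v = 0)
    (hvB : v ∈ LinearMap.range B.mulVecLin) : (A * B).rank + 2 ≤ Fintype.card n := by
  have := LinearMap.finrank_range_comp_add_two_le (f := A.mulVecLin) hv hAv hBv hvB
  rwa [← mulVecLin_mul, finrank_fintype_fun_eq_card] at this

theorem span_range_col_of_cons_zero {R : Type*} [Semiring R] {m k : ℕ} (s : Fin k → Fin m → R) :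
    span R (Set.range (of (Fin.cons 0 s : Fin (k + 1) → Fin m → R))ᵀ.col) =
      span R (Set.range s) := by
  rw [of_col, Fin.range_cons, span_insert_zero]

end Matrix

section EulerFunction

variable {t : ℝ}

theorem multipliable_one_sub_pow_succ (ht0 : 0 ≤ t) (ht1 : t < 1) :
    Multipliable fun k : ℕ => 1 - t ^ (k + 1) := by
  have : Summable fun k : ℕ => ‖-t ^ (k + 1)‖ := by
    simpa [abs_of_nonneg ht0, pow_succ] using (summable_geometric_of_lt_one ht0 ht1).mul_right t
  simpa only [sub_eq_add_neg] using multipliable_one_add_of_summable this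

theorem one_sub_sub_sq_le_prod_one_sub_pow (ht0 : 0 ≤ t) (ht1 : t ≤ 1) (N : ℕ) :
    1 - t - t ^ 2 ≤ ∏ k ∈ range N, (1 - t ^ (k + 1)) := by
  have hsharp (N : ℕ) : 1 - t - t ^ 2 + t ^ (N + 2) ≤ ∏ k ∈ range (N + 1), (1 - t ^ (k + 1)) := by
    induction N with
    | zero => simp
    | succ N ih =>
      have h1 : t ^ (N + 2) ≤ 1 := pow_le_one₀ ht0 ht1
      have h2 : t ^ (N + 2) ≤ t ^ 2 := pow_le_pow_of_le_one ht0 ht1 (by omega)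
      have h3 : t ^ (N + 3) = t * t ^ (N + 2) := by ring
      rw [prod_range_succ, h3]
      nlinarith [mul_le_mul_of_nonneg_right ih (sub_nonneg.mpr h1), pow_nonneg ht0 (N + 2)]
  rcases N with _ | N
  · rw [range_zero, prod_empty]
    nlinarith [sq_nonneg t]
  · linarith [hsharp N, pow_nonneg ht0 (N + 2)]

theorem one_sub_sub_sq_le_tprod (ht0 : 0 ≤ t) (ht1 : t < 1) :
    1 - t - t ^ 2 ≤ ∏' k : ℕ, (1 - t ^ (k + 1)) :=
  ge_of_tendsto (multipliable_one_sub_pow_succ ht0 ht1).hasProd.tendsto_prod_nat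
    (Eventually.of_forall (one_sub_sub_sq_le_prod_one_sub_pow ht0 ht1.le))

theorem tendsto_prod_one_sub_pow_sub (ht0 : 0 ≤ t) (ht1 : t < 1) :
    Tendsto (fun n => ∏ k ∈ range n, (1 - t ^ (k + 2)) - ∏ k ∈ range n, (1 - t ^ (k + 1)))
      atTop (𝓝 ((∏' k : ℕ, (1 - t ^ (k + 1))) / (1 - t) - ∏' k : ℕ, (1 - t ^ (k + 1)))) := by
  have h := (multipliable_one_sub_pow_succ ht0 ht1).hasProd.tendsto_prod_nat
  refine ((((tendsto_add_atTop_iff_nat 1).mpr h).div_const (1 - t)).sub h).congr fun n => ?_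
  rw [prod_range_succ', zero_add, pow_one, mul_div_cancel_right₀ _ (by linarith)]

theorem one_sub_mul_one_sub_sq_le (ht0 : 0 < t) (ht : t ≤ 1 / 2) {c : ℝ}
    (hc : 1 - t - t ^ 2 ≤ c) : (1 - c) * (1 - t) ^ 2 ≤ c / (1 - t) - c := by
  have h1t : 0 < 1 - t := by linarith
  rw [div_sub' h1t.ne', le_div_iff₀ h1t]
  nlinarith [mul_le_mul_of_nonneg_right hc (by positivity : (0 : ℝ) ≤ t + (1 - t) ^ 3),
    mul_nonneg (mul_nonneg (sq_nonneg t) (by linarith : (0 : ℝ) ≤ 1 - 2 * t))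
      (by linarith : (0 : ℝ) ≤ 1 + t), pow_pos ht0 5]

end EulerFunction

theorem prod_range_pow_sub_pow {K : Type*} [Field K] {x : K} (hx : x ≠ 0) (a d : ℕ) :
    ∏ i ∈ range a, (x ^ (a + d) - x ^ i) =
      x ^ ((a + d) * a) * ∏ k ∈ range a, (1 - x⁻¹ ^ (k + d + 1)) := by
  rw [← prod_range_reflect, pow_mul, ← card_range a, ← prod_const, card_range, ← prod_mul_distrib]
  refine prod_congr rfl fun k hk => ?_
  rw [mem_range] at hk
  rw [show a + d = (a - 1 - k) + (k + d + 1) by omega, pow_add, inv_pow]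
  field_simp

section MatrixChain

variable {F : Type*} [Field F] [Fintype F]

theorem natCard_linearIndependent_mem_span_le_semigroupLength (m : ℕ) :
    Nat.card { s : Fin (m + 1) → Fin (m + 2) → F //
        LinearIndependent F s ∧ Pi.single 0 1 ∈ span F (Set.range s) } ≤
      semigroupLength (Matrix (Fin (m + 2)) (Fin (m + 2)) F) := by
  set e₀ : Fin (m + 2) → F := Pi.single 0 1
  have he₀ : e₀ ≠ 0 := by simp [e₀]
  let I : Subsemigroup (Matrix (Fin (m + 2)) (Fin (m + 2)) F) :=
    { carrier := {A | A.rank ≤ m}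
      mul_mem' := fun ha _ => (Matrix.rank_mul_le_left _ _).trans ha }
  let T : Set (Matrix (Fin (m + 2)) (Fin (m + 2)) F) :=
    {A | A *ᵥ e₀ = 0 ∧ e₀ ∈ LinearMap.range A.mulVecLin ∧ A.rank = m + 1}
  have hmem (s : { s : Fin (m + 1) → Fin (m + 2) → F //
      LinearIndependent F s ∧ e₀ ∈ span F (Set.range s) }) :
      (Matrix.of (Fin.cons 0 s.1))ᵀ ∈ T := by
    obtain ⟨s, hs, he₀s⟩ := s
    refine ⟨by rw [Matrix.mulVec_single_one]; rfl, ?_, ?_⟩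
    · rwa [Matrix.range_mulVecLin, Matrix.span_range_col_of_cons_zero]
    · rw [Matrix.rank_eq_finrank_span_cols, Matrix.span_range_col_of_cons_zero,
        finrank_span_eq_card hs, Fintype.card_fin]
  refine (Nat.card_le_card_of_injective (β := T) (fun s => ⟨_, hmem s⟩)
    fun s s' h => Subtype.ext ?_).trans ?_
  · simpa only [Function.comp_apply, Matrix.of_col, Fin.cons_inj, true_and] using
      congrArg (Matrix.col ∘ Subtype.val) h
  refine natCard_le_semigroupLength I ⟨0, by simp [I]⟩ T ?_ ?_
  · exact Set.disjoint_left.mpr fun A ⟨_, _, hA⟩ (hAI : A.rank ≤ m) => by omega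
  · rintro a (ha | ha) b hb
    · exact (Matrix.rank_mul_le_left a b).trans ha
    rcases hb with hb | hb
    · exact (Matrix.rank_mul_le_right a b).trans hb
    · have := Matrix.rank_mul_add_two_le he₀ ha.1 hb.1 hb.2.1
      rw [Fintype.card_fin] at this
      change (a * b).rank ≤ m
      omega

local notation "q" => Fintype.card F

theorem natCard_linearIndependent_mem_span_eq (m : ℕ) :
    (Nat.card { s : Fin (m + 1) → Fin (m + 2) → F //
        LinearIndependent F s ∧ Pi.single 0 1 ∈ span F (Set.range s) } : ℝ) =
      (q : ℝ) ^ ((m + 2) * (m + 1)) * (∏ k ∈ range (m + 1), (1 - (q : ℝ)⁻¹ ^ (k + 2)) -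
        ∏ k ∈ range (m + 1), (1 - (q : ℝ)⁻¹ ^ (k + 1))) := by
  have hq : (q : ℝ) ≠ 0 := by simp
  have hcount := natCard_linearIndependent_mem_span_add (K := F)
    (Pi.single 0 1 : Fin (m + 2) → F) (m + 1)
  rw [card_linearIndependent_finCons (by simp) (by simp), card_linearIndependent (by simp),
    finrank_fin_fun] at hcount
  have hcast (i : ℕ) (hi : i ≤ m + 2) : ((q ^ (m + 2) - q ^ i : ℕ) : ℝ) = q ^ (m + 2) - q ^ i := by
    rw [Nat.cast_sub (Nat.pow_le_pow_right Fintype.card_pos hi)]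
    push_cast
    rfl
  have hP : ((∏ i : Fin (m + 1), (q ^ (m + 2) - q ^ (i : ℕ)) : ℕ) : ℝ) =
      (q : ℝ) ^ ((m + 2) * (m + 1)) * ∏ k ∈ range (m + 1), (1 - (q : ℝ)⁻¹ ^ (k + 2)) := by
    rw [Nat.cast_prod, Fin.prod_univ_eq_prod_range (fun i => ((q ^ (m + 2) - q ^ i : ℕ) : ℝ)),
      prod_congr rfl fun i hi => hcast i (by rw [mem_range] at hi; omega),
      prod_range_pow_sub_pow hq (m + 1) 1]
  have hQ : ((∏ i : Fin (m + 1), (q ^ (m + 2) - q ^ ((i : ℕ) + 1)) : ℕ) : ℝ) =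
      (q : ℝ) ^ ((m + 2) * (m + 1)) * ∏ k ∈ range (m + 1), (1 - (q : ℝ)⁻¹ ^ (k + 1)) := by
    rw [Nat.cast_prod,
      Fin.prod_univ_eq_prod_range (fun i => ((q ^ (m + 2) - q ^ (i + 1) : ℕ) : ℝ)),
      prod_congr rfl fun i hi => (hcast (i + 1) (by rw [mem_range] at hi; omega)).trans
        (by ring : (q : ℝ) ^ (m + 2) - q ^ (i + 1) = q * (q ^ (m + 1) - q ^ i)),
      prod_mul_distrib, prod_const, card_range, prod_range_pow_sub_pow hq (m + 1) 0]
    ring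
  rw [mul_sub, ← hP, ← hQ, ← hcount, Nat.cast_add, add_sub_cancel_right]

theorem prod_sub_prod_le_semigroupLength_div (m : ℕ) :
    ∏ k ∈ range (m + 1), (1 - (q : ℝ)⁻¹ ^ (k + 2)) -
        ∏ k ∈ range (m + 1), (1 - (q : ℝ)⁻¹ ^ (k + 1)) ≤
      semigroupLength (Matrix (Fin (m + 2)) (Fin (m + 2)) F) /
        (q : ℝ) ^ ((m + 2) ^ 2 - (m + 2)) := by
  rw [le_div_iff₀ (by positivity), show (m + 2) ^ 2 - (m + 2) = (m + 2) * (m + 1) by ring_nf; omega,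
    mul_comm, ← natCard_linearIndependent_mem_span_eq]
  exact_mod_cast natCard_linearIndependent_mem_span_le_semigroupLength (F := F) m

end MatrixChain

theorem semigroupLength_GLS_general (q : ℕ) (F : Type) [Field F] [Fintype F] (hF : Fintype.card F = q) :
    ∀ ε : ℝ, 0 < ε → ∀ᶠ n : ℕ in atTop,
      (1 - (∏' k : ℕ, (1 - ((q : ℝ) ^ (k + 1))⁻¹))) * (1 - 1 / (q : ℝ)) ^ 2 - ε ≤
        (semigroupLength (Matrix (Fin n) (Fin n) F) : ℝ) / (q : ℝ) ^ (n ^ 2 - n) := by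
  intro ε hε
  subst hF
  have hq : (2 : ℝ) ≤ Fintype.card F := by exact_mod_cast Fintype.one_lt_card (α := F)
  have ht0 : 0 < (Fintype.card F : ℝ)⁻¹ := by positivity
  have ht : (Fintype.card F : ℝ)⁻¹ ≤ 1 / 2 := by
    rw [inv_le_comm₀ (by positivity) (by norm_num)]; linarith
  simp only [← inv_pow, one_div]
  have hlim := tendsto_prod_one_sub_pow_sub ht0.le (by linarith)
  have hbound := one_sub_mul_one_sub_sq_le ht0 ht
    (one_sub_sub_sq_le_tprod ht0.le (by linarith))
  filter_upwards [(tendsto_sub_atTop_nat 1).eventually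
      (hlim.eventually_const_le ((sub_lt_self _ hε).trans_le hbound)),
    eventually_ge_atTop 2] with n hD hn
  obtain ⟨m, rfl⟩ := Nat.exists_eq_add_of_le' hn
  exact hD.trans (prod_sub_prod_le_semigroupLength_div m)

/-- Let `q` be a prime power and let `GLS(n,q)` be the multiplicative semigroup of all
`n×n` matrices over the field with `q` elements.  Then
`liminf_{n→∞} l(GLS(n,q)) / q^(n²−n) ≥ (1 − c(q))·(1 − 1/q)²`, where
`c(q) = ∏_{k=1}^∞ (1 − q^{−k})`.  (The liminf inequality is expressed in the usual
ε-form: for every `ε > 0`, eventually the ratio exceeds the bound minus `ε`.) -/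
theorem semigroupLength_GLS (q : ℕ) (hq : ∃ p m : ℕ, p.Prime ∧ 0 < m ∧ q = p ^ m)
    (F : Type) [Field F] [Fintype F] (hF : Fintype.card F = q) :
    ∀ ε : ℝ, 0 < ε → ∀ᶠ n : ℕ in atTop,
      (1 - (∏' k : ℕ, (1 - ((q : ℝ) ^ (k + 1))⁻¹))) * (1 - 1 / (q : ℝ)) ^ 2 - ε ≤
        (semigroupLength (Matrix (Fin n) (Fin n) F) : ℝ) / (q : ℝ) ^ (n ^ 2 - n) :=
  semigroupLength_GLS_general q F hF
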